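/- Let Σ be a real symmetric positive semidefinite d×d matrix, λ > 0, θ ∈ ℝ^d, and let x₁, x₂ ∈ ℝ^d, y₁, y₂ ∈ ℝ satisfy ‖x₁‖₂ ≤ C, ‖x₂‖₂ ≤ C, |y₁| ≤ M, |y₂| ≤ M for some C, M ≥ 0. Then ‖(Σ + λI)^{-1/2}·(x₁y₁ − x₁x₁ᵀθ − x₂y₂ + x₂x₂ᵀθ)‖₂ ≤ √2·λ^{-1/2}·max(3C‖θ‖₂ + M, C)·√(‖x₁ − x₂‖₂² + (y₁ − y₂)²). -/

import Mathlib

open Matrix MeasureTheory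

/-!
Write `R` for the symmetric square root of `A = Σ + λI`. Since `RᵀR = A` and
`wᵀAw ≥ λ‖w‖²`, we get `‖Rw‖ ≥ √λ‖w‖`, so `R` is invertible and `‖R⁻¹v‖ ≤ λ^{-1/2}‖v‖`.
The vector `v` is `g(x₁, y₁) - g(x₂, y₂)` for `g(x, y) = (y - ⟪x, θ⟫) x`, and splitting
`v = (y₁ - y₂) x₁ + y₂ (x₁ - x₂) - ⟪x₁, θ⟫ (x₁ - x₂) - ⟪x₁ - x₂, θ⟫ x₂` bounds `‖v‖` by
`max(3C‖θ‖ + M, C) (‖x₁ - x₂‖ + |y₁ - y₂|)`; finally `a + b ≤ √2 √(a² + b²)`.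
-/

/-- The operator norm of a real `d × d` matrix induced by the Euclidean norm on `ℝ^d`. -/
noncomputable def opNorm {d : ℕ} (A : Matrix (Fin d) (Fin d) ℝ) : ℝ :=
  ‖Matrix.toEuclideanCLM (𝕜 := ℝ) A‖

/-- The Euclidean norm `‖x‖₂` of a vector `x ∈ ℝ^d`. -/
noncomputable def enorm2 {d : ℕ} (x : Fin d → ℝ) : ℝ :=
  Real.sqrt (∑ i, x i ^ 2)

/-- Apply a scalar function to the eigenvalues of a symmetric matrix (continuous
functional calculus); junk value `0` if the matrix is not symmetric. -/
noncomputable def matFun {d : ℕ} (A : Matrix (Fin d) (Fin d) ℝ) (h : ℝ → ℝ) :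
    Matrix (Fin d) (Fin d) ℝ :=
  if hA : A.IsHermitian then
    (hA.eigenvectorUnitary : Matrix (Fin d) (Fin d) ℝ) *
      Matrix.diagonal (fun i => h (hA.eigenvalues i)) *
      star (hA.eigenvectorUnitary : Matrix (Fin d) (Fin d) ℝ)
  else 0

section Residual

variable {E : Type*} [NormedAddCommGroup E] [InnerProductSpace ℝ E]

open RealInnerProductSpace in
theorem norm_residual_smul_sub_le {C M : ℝ} {x₁ x₂ θ : E} {y₁ y₂ : ℝ}
    (hx₁ : ‖x₁‖ ≤ C) (hx₂ : ‖x₂‖ ≤ C) (hy₂ : |y₂| ≤ M) :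
    ‖(y₁ - ⟪x₁, θ⟫) • x₁ - (y₂ - ⟪x₂, θ⟫) • x₂‖ ≤
      C * |y₁ - y₂| + (M + 2 * C * ‖θ‖) * ‖x₁ - x₂‖ := by
  have hdecomp : (y₁ - ⟪x₁, θ⟫) • x₁ - (y₂ - ⟪x₂, θ⟫) • x₂ =
      (y₁ - y₂) • x₁ + y₂ • (x₁ - x₂) - (⟪x₁, θ⟫ • (x₁ - x₂) + ⟪x₁ - x₂, θ⟫ • x₂) := by
    rw [inner_sub_left]
    module
  have hC : 0 ≤ C := (norm_nonneg _).trans hx₁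
  have hinner₁ : |⟪x₁, θ⟫| ≤ C * ‖θ‖ :=
    (abs_real_inner_le_norm _ _).trans (mul_le_mul_of_nonneg_right hx₁ (norm_nonneg _))
  have hinner₂ : |⟪x₁ - x₂, θ⟫| ≤ ‖x₁ - x₂‖ * ‖θ‖ := abs_real_inner_le_norm _ _
  have h₁ : |y₁ - y₂| * ‖x₁‖ ≤ |y₁ - y₂| * C := mul_le_mul_of_nonneg_left hx₁ (abs_nonneg _)
  have h₂ : |y₂| * ‖x₁ - x₂‖ ≤ M * ‖x₁ - x₂‖ := mul_le_mul_of_nonneg_right hy₂ (norm_nonneg _)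
  have h₃ : |⟪x₁, θ⟫| * ‖x₁ - x₂‖ ≤ C * ‖θ‖ * ‖x₁ - x₂‖ :=
    mul_le_mul_of_nonneg_right hinner₁ (norm_nonneg _)
  have h₄ : |⟪x₁ - x₂, θ⟫| * ‖x₂‖ ≤ ‖x₁ - x₂‖ * ‖θ‖ * C :=
    mul_le_mul hinner₂ hx₂ (norm_nonneg _) (by positivity)
  rw [hdecomp]
  refine (norm_sub_le _ _).trans ?_
  refine (add_le_add (norm_add_le _ _) (norm_add_le _ _)).trans ?_
  simp only [norm_smul, Real.norm_eq_abs]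
  linarith

end Residual

theorem add_le_sqrt_two_mul_sqrt_sq_add_sq (a b : ℝ) : a + b ≤ √2 * √(a ^ 2 + b ^ 2) := by
  rw [← Real.sqrt_mul zero_le_two]
  refine Real.le_sqrt_of_sq_le ?_
  nlinarith [sq_nonneg (a - b)]

section EuclideanNorm

variable {d : ℕ}

lemma enorm2_nonneg (x : Fin d → ℝ) : 0 ≤ enorm2 x := Real.sqrt_nonneg _

lemma enorm2_eq_sqrt_dotProduct (x : Fin d → ℝ) : enorm2 x = √(x ⬝ᵥ x) := by
  simp only [enorm2, dotProduct, sq]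

lemma enorm2_eq_norm_toLp (x : Fin d → ℝ) : enorm2 x = ‖WithLp.toLp 2 x‖ := by
  rw [EuclideanSpace.norm_eq]
  simp [enorm2]

open RealInnerProductSpace in
lemma enorm2_residual_le {C M : ℝ} {x₁ x₂ θ : Fin d → ℝ} {y₁ y₂ : ℝ}
    (hx₁ : enorm2 x₁ ≤ C) (hx₂ : enorm2 x₂ ≤ C) (hy₂ : |y₂| ≤ M) :
    enorm2 (y₁ • x₁ - vecMulVec x₁ x₁ *ᵥ θ - y₂ • x₂ + vecMulVec x₂ x₂ *ᵥ θ) ≤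
      C * |y₁ - y₂| + (M + 2 * C * enorm2 θ) * enorm2 (x₁ - x₂) := by
  have hres : WithLp.toLp 2 (y₁ • x₁ - vecMulVec x₁ x₁ *ᵥ θ - y₂ • x₂ + vecMulVec x₂ x₂ *ᵥ θ) =
      (y₁ - ⟪WithLp.toLp 2 x₁, WithLp.toLp 2 θ⟫) • WithLp.toLp 2 x₁ -
        (y₂ - ⟪WithLp.toLp 2 x₂, WithLp.toLp 2 θ⟫) • WithLp.toLp 2 x₂ := by
    simp only [vecMulVec_mulVec, op_smul_eq_smul, EuclideanSpace.inner_toLp_toLp, star_trivial,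
      dotProduct_comm θ, WithLp.toLp_add, WithLp.toLp_sub, WithLp.toLp_smul]
    module
  simp only [enorm2_eq_norm_toLp] at hx₁ hx₂ ⊢
  rw [hres, WithLp.toLp_sub]
  exact norm_residual_smul_sub_le hx₁ hx₂ hy₂

lemma enorm2_eq_zero {x : Fin d → ℝ} : enorm2 x = 0 ↔ x = 0 := by
  rw [enorm2_eq_norm_toLp, norm_eq_zero, WithLp.toLp_eq_zero]

lemma matFun_eq_cfc {A : Matrix (Fin d) (Fin d) ℝ} (hA : A.IsHermitian) (f : ℝ → ℝ) :
    matFun A f = cfc f A := by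
  rw [hA.cfc_eq, matFun, dif_pos hA]
  rfl

lemma matFun_sqrt_transpose_mul_self {A : Matrix (Fin d) (Fin d) ℝ} (hA : A.PosSemidef) :
    (matFun A Real.sqrt)ᵀ * matFun A Real.sqrt = A := by
  have hspec : ∀ x ∈ spectrum ℝ A, √x * √x = x := by
    rw [hA.1.spectrum_real_eq_range_eigenvalues]
    rintro _ ⟨i, rfl⟩
    exact Real.mul_self_sqrt (hA.eigenvalues_nonneg i)
  have hsymm : (cfc Real.sqrt A)ᵀ = cfc Real.sqrt A :=
    (cfc_predicate Real.sqrt A : IsSelfAdjoint _).star_eq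
  rw [matFun_eq_cfc hA.1, hsymm, ← cfc_mul .., cfc_congr hspec]
  exact cfc_id' ℝ A hA.1

lemma Matrix.PosSemidef.mul_dotProduct_self_le_dotProduct_add_smul_one_mulVec
    {S : Matrix (Fin d) (Fin d) ℝ} (hS : S.PosSemidef) (lam : ℝ) (w : Fin d → ℝ) :
    lam * (w ⬝ᵥ w) ≤ w ⬝ᵥ ((S + lam • 1) *ᵥ w) := by
  have hSw : 0 ≤ w ⬝ᵥ (S *ᵥ w) := by simpa using hS.dotProduct_mulVec_nonneg w
  rw [add_mulVec, smul_mulVec, one_mulVec, dotProduct_add, dotProduct_smul, smul_eq_mul]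
  linarith

variable {R A : Matrix (Fin d) (Fin d) ℝ} {lam : ℝ}

lemma sqrt_mul_enorm2_le_enorm2_mulVec (hRA : Rᵀ * R = A)
    (hA : ∀ w, lam * (w ⬝ᵥ w) ≤ w ⬝ᵥ (A *ᵥ w)) (w : Fin d → ℝ) :
    √lam * enorm2 w ≤ enorm2 (R *ᵥ w) := by
  have hquad : R *ᵥ w ⬝ᵥ R *ᵥ w = w ⬝ᵥ (A *ᵥ w) := by
    rw [dotProduct_mulVec, ← vecMul_transpose, vecMul_vecMul, ← dotProduct_mulVec, hRA]
  rw [enorm2_eq_sqrt_dotProduct, enorm2_eq_sqrt_dotProduct, hquad,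
    ← Real.sqrt_mul' _ (by simpa using dotProduct_self_star_nonneg w)]
  exact Real.sqrt_le_sqrt (hA w)

lemma enorm2_inv_mulVec_le (hlam : 0 < lam) (hRA : Rᵀ * R = A)
    (hA : ∀ w, lam * (w ⬝ᵥ w) ≤ w ⬝ᵥ (A *ᵥ w)) (v : Fin d → ℝ) :
    enorm2 (R⁻¹ *ᵥ v) ≤ (√lam)⁻¹ * enorm2 v := by
  have hbound := sqrt_mul_enorm2_le_enorm2_mulVec hRA hA
  have hker : ∀ w, R *ᵥ w = 0 → w = 0 := fun w hw => by
    have hw' := hbound w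
    rw [hw, enorm2_eq_zero.2 rfl] at hw'
    exact enorm2_eq_zero.1 <| le_antisymm
      (nonpos_of_mul_nonpos_right hw' (Real.sqrt_pos.2 hlam)) (enorm2_nonneg w)
  have hR : IsUnit R.det := by
    refine (isUnit_iff_isUnit_det R).1 (mulVec_injective_iff_isUnit.1 fun a b hab => ?_)
    rw [← sub_eq_zero, ← mulVec_sub] at hab
    exact sub_eq_zero.1 (hker _ hab)
  rw [le_inv_mul_iff₀ (by positivity)]
  simpa [mulVec_mulVec, mul_nonsing_inv R hR] using hbound (R⁻¹ *ᵥ v)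

end EuclideanNorm

theorem statement13_general {d : ℕ} (S : Matrix (Fin d) (Fin d) ℝ)
    (hS : S.PosSemidef) (lam : ℝ) (hlam : 0 < lam) (θ : Fin d → ℝ)
    (C M : ℝ) (hC : 0 ≤ C) (x₁ x₂ : Fin d → ℝ) (y₁ y₂ : ℝ)
    (hx1 : enorm2 x₁ ≤ C) (hx2 : enorm2 x₂ ≤ C) (hy2 : |y₂| ≤ M) :
    enorm2 (((matFun (S + lam • 1) Real.sqrt)⁻¹) *ᵥ
        (y₁ • x₁ - Matrix.vecMulVec x₁ x₁ *ᵥ θ - y₂ • x₂ + Matrix.vecMulVec x₂ x₂ *ᵥ θ)) ≤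
      Real.sqrt 2 * lam ^ (-(1 : ℝ) / 2) * max (3 * C * enorm2 θ + M) C *
        Real.sqrt (enorm2 (x₁ - x₂) ^ 2 + (y₁ - y₂) ^ 2) := by
  set v := y₁ • x₁ - vecMulVec x₁ x₁ *ᵥ θ - y₂ • x₂ + vecMulVec x₂ x₂ *ᵥ θ
  set K := max (3 * C * enorm2 θ + M) C
  have hA : (S + lam • 1).PosSemidef := hS.add (PosSemidef.one.smul hlam.le)
  have hv := enorm2_residual_le (y₁ := y₁) (θ := θ) hx1 hx2 hy2
  have hK : C * |y₁ - y₂| + (M + 2 * C * enorm2 θ) * enorm2 (x₁ - x₂) ≤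
      K * (enorm2 (x₁ - x₂) + |y₁ - y₂|) := by
    have : 0 ≤ C * enorm2 θ := mul_nonneg hC (enorm2_nonneg θ)
    nlinarith [le_max_left (3 * C * enorm2 θ + M) C, le_max_right (3 * C * enorm2 θ + M) C,
      enorm2_nonneg (x₁ - x₂), abs_nonneg (y₁ - y₂)]
  have hlam' : lam ^ (-(1 : ℝ) / 2) = (√lam)⁻¹ := by
    rw [Real.sqrt_eq_rpow, ← Real.rpow_neg hlam.le]
    norm_num
  calc _ ≤ (√lam)⁻¹ * enorm2 v :=
        enorm2_inv_mulVec_le hlam (matFun_sqrt_transpose_mul_self hA)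
          (hS.mul_dotProduct_self_le_dotProduct_add_smul_one_mulVec lam) _
    _ ≤ (√lam)⁻¹ * (K * (enorm2 (x₁ - x₂) + |y₁ - y₂|)) := by grw [hv, hK]
    _ ≤ (√lam)⁻¹ * (K * (√2 * √(enorm2 (x₁ - x₂) ^ 2 + |y₁ - y₂| ^ 2))) := by
        have : 0 ≤ K := hC.trans (le_max_right _ _)
        grw [add_le_sqrt_two_mul_sqrt_sq_add_sq]
    _ = _ := by rw [hlam', sq_abs]; ring

/-- For PSD `Σ`, `λ > 0`, `θ ∈ ℝ^d` and `‖x₁‖₂, ‖x₂‖₂ ≤ C`,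
`|y₁|, |y₂| ≤ M`:
`‖(Σ+λI)^{-1/2} (x₁y₁ - x₁x₁ᵀθ - x₂y₂ + x₂x₂ᵀθ)‖₂
  ≤ √2 λ^{-1/2} max(3C‖θ‖₂ + M, C) √(‖x₁-x₂‖₂² + (y₁-y₂)²)`. -/
theorem statement13 {d : ℕ} (hd : 0 < d) (S : Matrix (Fin d) (Fin d) ℝ)
    (hS : S.PosSemidef) (lam : ℝ) (hlam : 0 < lam) (θ : Fin d → ℝ)
    (C M : ℝ) (hC : 0 ≤ C) (hM : 0 ≤ M) (x₁ x₂ : Fin d → ℝ) (y₁ y₂ : ℝ)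
    (hx1 : enorm2 x₁ ≤ C) (hx2 : enorm2 x₂ ≤ C) (hy1 : |y₁| ≤ M) (hy2 : |y₂| ≤ M) :
    enorm2 (((matFun (S + lam • 1) Real.sqrt)⁻¹) *ᵥ
        (y₁ • x₁ - Matrix.vecMulVec x₁ x₁ *ᵥ θ - y₂ • x₂ + Matrix.vecMulVec x₂ x₂ *ᵥ θ)) ≤
      Real.sqrt 2 * lam ^ (-(1 : ℝ) / 2) * max (3 * C * enorm2 θ + M) C *
        Real.sqrt (enorm2 (x₁ - x₂) ^ 2 + (y₁ - y₂) ^ 2) :=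
  statement13_general S hS lam hlam θ C M hC x₁ x₂ y₁ y₂ hx1 hx2 hy2
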